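/- arXiv:0908.1457 — 3 statements merged into one kernel-verified Lean document; each statement's English description precedes it below -/
import Mathlib

section
/- Let R be a finite ring, φ : R → ℤ_{r_1} × ⋯ × ℤ_{r_ℓ} an additive group isomorphism, m, n positive integers, and f_1,…,f_n : R^m → R arbitrary functions. For all y, a ∈ R^m and w ∈ R^n, the coordinate indexed by (a, w) of the vector (W^{⊗m} ⊗ I) · U_{f_1,…,f_n} · e_{(y, 0,…,0)} equals |R|^{−m/2} · exp(2πι · g_a(y)) if w = (f_1(y),…,f_n(y)), and equals 0 otherwise, where g_a(y) = Σ_{i=1}^ℓ Σ_{j=1}^m φ_i(a_j)·φ_i(y_j) / r_i. (In particular, measuring the first m registers of the procedure Encoding(f_1,…,f_n) applied to |y_1,…,y_m⟩, with outcome a, leaves the output registers in the state exp(2πι g_a(y)) |f_1(y),…,f_n(y)⟩.) -/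
/-- For all `y, a ∈ R^m` and `w ∈ R^n`, the coordinate indexed by `(a, w)`
of `(W^{⊗m} ⊗ I) · U_{f_1,…,f_n} · e_{(y,0,…,0)}` equals
`|R|^{-m/2} · exp(2πI · g_a(y))` if `w = (f₁(y),…,f_n(y))`, and `0` otherwise, where
`g_a(y) = Σ_i Σ_j φ_i(a_j)·φ_i(y_j)/r_i`. -/
theorem stmt3 (R : Type) [Ring R] [Fintype R] [DecidableEq R]
    (ℓ : ℕ) (hℓ : 1 ≤ ℓ) (r : Fin ℓ → ℕ) (hr : ∀ i, 0 < r i)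
    (φ : R ≃+ ((i : Fin ℓ) → ZMod (r i)))
    (m n : ℕ) (hm : 0 < m) (hn : 0 < n)
    (f : Fin n → (Fin m → R) → R)
    (W : Matrix R R ℂ)
    (hW : ∀ y z : R, W z y =
      ((Real.sqrt (Fintype.card R) : ℂ))⁻¹ *
        Complex.exp (2 * (Real.pi : ℂ) * Complex.I *
          ∑ i : Fin ℓ, ((φ y i).val : ℂ) * ((φ z i).val : ℂ) / (r i : ℂ)))
    (U : Matrix ((Fin m → R) × (Fin n → R)) ((Fin m → R) × (Fin n → R)) ℂ)
    (hU : ∀ (y : Fin m → R) (z : Fin n → R) (p : (Fin m → R) × (Fin n → R)),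
      U p (y, z) = if p = (y, fun j => z j + f j y) then 1 else 0)
    -- `WmI` is the Kronecker product of `m` copies of `W` with the identity on `ℂ^{R^n}`
    (WmI : Matrix ((Fin m → R) × (Fin n → R)) ((Fin m → R) × (Fin n → R)) ℂ)
    (hWmI : ∀ (a y : Fin m → R) (w z : Fin n → R),
      WmI (a, w) (y, z) = (∏ j : Fin m, W (a j) (y j)) * (if w = z then 1 else 0))
    (y a : Fin m → R) (w : Fin n → R) :
    WmI.mulVec (U.mulVec (fun p => if p = (y, fun _ => 0) then 1 else 0)) (a, w) =
      if w = (fun j => f j y) then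
        ((Real.sqrt (Fintype.card R) : ℂ) ^ m)⁻¹ *
          Complex.exp (2 * (Real.pi : ℂ) * Complex.I *
            ∑ i : Fin ℓ, ∑ j : Fin m,
              ((φ (a j) i).val : ℂ) * ((φ (y j) i).val : ℂ) / (r i : ℂ))
      else 0 := by
  have hU' : U.mulVec (fun p => if p = (y, fun _ => 0) then 1 else 0) =
      fun p => if p = (y, fun j => f j y) then 1 else 0 := by
    funext p
    simp only [Matrix.mulVec, dotProduct, mul_ite, mul_one, mul_zero,
      Finset.sum_ite_eq' (Finset.univ), Finset.mem_univ, if_true]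
    rw [hU y (fun _ => 0) p]
    simp
  rw [hU']
  have key : WmI.mulVec (fun p => if p = (y, fun j => f j y) then 1 else 0) (a, w) =
      WmI (a, w) (y, fun j => f j y) := by
    simp [Matrix.mulVec, dotProduct, mul_ite]
  rw [key, hWmI]
  by_cases hw : w = fun j => f j y
  · simp only [hw, if_true, mul_one]
    have hprod : ∀ j : Fin m, W (a j) (y j) =
        ((Real.sqrt (Fintype.card R) : ℂ))⁻¹ *
          Complex.exp (2 * (Real.pi : ℂ) * Complex.I *
            ∑ i : Fin ℓ, ((φ (a j) i).val : ℂ) * ((φ (y j) i).val : ℂ) / (r i : ℂ)) := by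
      intro j; rw [hW (y j) (a j)]
      have : (∑ i : Fin ℓ, ((φ (y j) i).val : ℂ) * ((φ (a j) i).val : ℂ) / (r i : ℂ)) =
          ∑ i : Fin ℓ, ((φ (a j) i).val : ℂ) * ((φ (y j) i).val : ℂ) / (r i : ℂ) :=
        Finset.sum_congr rfl fun i _ => by ring
      rw [this]
    rw [Finset.prod_congr rfl (fun j _ => hprod j), Finset.prod_mul_distrib,
      Finset.prod_const, Finset.card_univ, Fintype.card_fin, ← Complex.exp_sum,
      ← Finset.mul_sum, Finset.sum_comm, inv_pow]
  · simp [hw]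
end

section
/- Let R be a finite ring, φ : R → ℤ_{r_1} × ⋯ × ℤ_{r_ℓ} an additive group isomorphism, m, n positive integers, and f_1,…,f_n : R^m → R arbitrary functions. Fix a ∈ R^m and let P_a : ℂ^{R^m × R^n} → ℂ^{R^n} be the linear map with (P_a v)(w) = v(a, w) for all w ∈ R^n. Then for every family of complex amplitudes (α_y)_{y ∈ R^m}: P_a( (W^{⊗m} ⊗ I) · U_{f_1,…,f_n} · Σ_{y ∈ R^m} α_y e_{(y, 0,…,0)} ) = |R|^{−m/2} · Σ_{y ∈ R^m} α_y · exp(2πι g_a(y)) · e_{(f_1(y),…,f_n(y))}, where g_a(y) = Σ_{i=1}^ℓ Σ_{j=1}^m φ_i(a_j)·φ_i(y_j) / r_i. -/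
/-- Fix `a ∈ R^m` and let `P_a : ℂ^{R^m × R^n} → ℂ^{R^n}` be the map
`(P_a v)(w) = v(a, w)`.  For every family of amplitudes `(α_y)_{y ∈ R^m}`:
`P_a((W^{⊗m} ⊗ I) · U_{f_1,…,f_n} · Σ_y α_y e_{(y,0)})
  = |R|^{-m/2} · Σ_y α_y · exp(2πI g_a(y)) · e_{(f₁(y),…,f_n(y))}`,
where `g_a(y) = Σ_i Σ_j φ_i(a_j)·φ_i(y_j)/r_i`. -/
theorem stmt4 (R : Type) [Ring R] [Fintype R] [DecidableEq R]
    (ℓ : ℕ) (hℓ : 1 ≤ ℓ) (r : Fin ℓ → ℕ) (hr : ∀ i, 0 < r i)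
    (φ : R ≃+ ((i : Fin ℓ) → ZMod (r i)))
    (m n : ℕ) (hm : 0 < m) (hn : 0 < n)
    (f : Fin n → (Fin m → R) → R)
    (W : Matrix R R ℂ)
    (hW : ∀ y z : R, W z y =
      ((Real.sqrt (Fintype.card R) : ℂ))⁻¹ *
        Complex.exp (2 * (Real.pi : ℂ) * Complex.I *
          ∑ i : Fin ℓ, ((φ y i).val : ℂ) * ((φ z i).val : ℂ) / (r i : ℂ)))
    (U : Matrix ((Fin m → R) × (Fin n → R)) ((Fin m → R) × (Fin n → R)) ℂ)
    (hU : ∀ (y : Fin m → R) (z : Fin n → R) (p : (Fin m → R) × (Fin n → R)),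
      U p (y, z) = if p = (y, fun j => z j + f j y) then 1 else 0)
    -- `WmI` is the Kronecker product of `m` copies of `W` with the identity on `ℂ^{R^n}`
    (WmI : Matrix ((Fin m → R) × (Fin n → R)) ((Fin m → R) × (Fin n → R)) ℂ)
    (hWmI : ∀ (a y : Fin m → R) (w z : Fin n → R),
      WmI (a, w) (y, z) = (∏ j : Fin m, W (a j) (y j)) * (if w = z then 1 else 0))
    (a : Fin m → R)
    (P : ((Fin m → R) × (Fin n → R) → ℂ) → ((Fin n → R) → ℂ))
    (hP : ∀ (v : (Fin m → R) × (Fin n → R) → ℂ) (w : Fin n → R), P v w = v (a, w))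
    (α : (Fin m → R) → ℂ) :
    P (WmI.mulVec (U.mulVec
        (∑ y : Fin m → R, fun p => α y * (if p = (y, fun _ => 0) then 1 else 0)))) =
      ((Real.sqrt (Fintype.card R) : ℂ) ^ m)⁻¹ •
        ∑ y : Fin m → R, fun w =>
          α y *
            Complex.exp (2 * (Real.pi : ℂ) * Complex.I *
              ∑ i : Fin ℓ, ∑ j : Fin m,
                ((φ (a j) i).val : ℂ) * ((φ (y j) i).val : ℂ) / (r i : ℂ)) *
            (if w = (fun j => f j y) then 1 else 0) := by

  have hv : U.mulVec (∑ y : Fin m → R, fun p => α y * (if p = (y, fun _ => 0) then 1 else 0))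
      = fun q => α q.1 * (if q.2 = fun j => f j q.1 then 1 else 0) := by
    funext q
    simp only [Matrix.mulVec, dotProduct, Finset.sum_apply, Finset.mul_sum]
    rw [Finset.sum_comm]
    have key : ∀ y : Fin m → R, ∑ p : (Fin m → R) × (Fin n → R),
        U q p * (α y * (if p = (y, fun _ => 0) then 1 else 0))
        = (if q = (y, fun j => f j y) then 1 else 0) * α y := by
      intro y
      rw [Finset.sum_eq_single (y, fun _ => (0:R))]
      · rw [hU]; simp
      · intro p _ hp; simp [hp]
      · simp
    rw [Finset.sum_congr rfl fun y _ => key y]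
    obtain ⟨y0, z0⟩ := q
    rw [Finset.sum_eq_single y0]
    · simp
    · intro y _ hy
      rw [if_neg, zero_mul]
      exact fun h => hy (congrArg Prod.fst h).symm
    · simp
  rw [hv]
  funext w
  rw [hP]
  simp only [Matrix.mulVec, dotProduct]
  rw [Fintype.sum_prod_type]
  have key2 : ∀ y : Fin m → R, ∑ z : Fin n → R,
      WmI (a, w) (y, z) * (α y * (if z = fun j => f j y then 1 else 0))
      = (∏ j : Fin m, W (a j) (y j)) * (α y * (if w = fun j => f j y then 1 else 0)) := by
    intro y
    rw [Finset.sum_eq_single w]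
    · rw [hWmI]; simp
    · intro z _ hz
      rw [hWmI]
      simp [(Ne.symm hz : ¬ w = z)]
    · simp
  rw [Finset.sum_congr rfl fun y _ => key2 y]
  have hterm : ∀ y : Fin m → R,
      (∏ j : Fin m, W (a j) (y j)) * (α y * (if w = fun j => f j y then 1 else 0))
      = ((Real.sqrt (Fintype.card R) : ℂ) ^ m)⁻¹ *
        (α y *
          Complex.exp (2 * (Real.pi : ℂ) * Complex.I *
            ∑ i : Fin ℓ, ∑ j : Fin m,
              ((φ (a j) i).val : ℂ) * ((φ (y j) i).val : ℂ) / (r i : ℂ)) *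
          (if w = fun j => f j y then 1 else 0)) := by
    intro y
    have hprod : (∏ j : Fin m, W (a j) (y j))
        = ((Real.sqrt (Fintype.card R) : ℂ) ^ m)⁻¹ *
          Complex.exp (2 * (Real.pi : ℂ) * Complex.I *
            ∑ i : Fin ℓ, ∑ j : Fin m,
              ((φ (a j) i).val : ℂ) * ((φ (y j) i).val : ℂ) / (r i : ℂ)) := by
      have hWj : ∀ j : Fin m, W (a j) (y j) =
          ((Real.sqrt (Fintype.card R) : ℂ))⁻¹ *
            Complex.exp (2 * (Real.pi : ℂ) * Complex.I *
              ∑ i : Fin ℓ, ((φ (a j) i).val : ℂ) * ((φ (y j) i).val : ℂ) / (r i : ℂ)) := by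
        intro j
        have hsum : (∑ i : Fin ℓ, ((φ (y j) i).val : ℂ) * ((φ (a j) i).val : ℂ) / (r i : ℂ))
            = ∑ i : Fin ℓ, ((φ (a j) i).val : ℂ) * ((φ (y j) i).val : ℂ) / (r i : ℂ) :=
          Finset.sum_congr rfl fun i _ => by ring
        rw [hW, hsum]
      rw [Finset.prod_congr rfl fun j _ => hWj j, Finset.prod_mul_distrib,
        Finset.prod_const, ← Complex.exp_sum, ← Finset.mul_sum, Finset.sum_comm,
        Finset.card_univ, Fintype.card_fin, inv_pow]
    rw [hprod]
    ring
  rw [Finset.sum_congr rfl fun y _ => hterm y, ← Finset.mul_sum]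
  simp only [Pi.smul_apply, Finset.sum_apply, smul_eq_mul]
end

section
/- Let R be a finite ring, φ : R → ℤ_{r_1} × ⋯ × ℤ_{r_ℓ} an additive group isomorphism, q, m, n positive integers, and f_1,…,f_n : (R^q)^m → R^q arbitrary functions. For all y, a ∈ (R^q)^m and w ∈ (R^q)^n, the coordinate indexed by (a, w) of the vector ((W')^{⊗m} ⊗ I) · U_{f_1,…,f_n} · e_{(y, 0,…,0)} equals |R|^{−qm/2} · exp(2πι · Σ_{i=1}^ℓ Σ_{j=1}^m ψ_i(a_j)·ψ_i(y_j) / r_i) if w = (f_1(y),…,f_n(y)), and equals 0 otherwise. -/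
/-- Vector-linear analogue of Statement 3: for all `y, a ∈ (R^q)^m` and
`w ∈ (R^q)^n`, the coordinate indexed by `(a, w)` of
`((W')^{⊗m} ⊗ I) · U_{f₁,…,f_n} · e_{(y,0,…,0)}` equals
`|R|^{-qm/2} · exp(2πI · Σ_i Σ_j ψ_i(a_j)·ψ_i(y_j)/r_i)` if `w = (f₁(y),…,f_n(y))`,
and `0` otherwise. -/
theorem stmt9 (R : Type) [Ring R] [Fintype R] [DecidableEq R]
    (ℓ : ℕ) (hℓ : 1 ≤ ℓ) (r : Fin ℓ → ℕ) (hr : ∀ i, 0 < r i)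
    (φ : R ≃+ ((i : Fin ℓ) → ZMod (r i)))
    (q m n : ℕ) (hq : 0 < q) (hm : 0 < m) (hn : 0 < n)
    (f : Fin n → (Fin m → Fin q → R) → (Fin q → R))
    (W' : Matrix (Fin q → R) (Fin q → R) ℂ)
    (hW' : ∀ y z : Fin q → R, W' z y =
      ((Real.sqrt (Fintype.card R) : ℂ) ^ q)⁻¹ *
        Complex.exp (2 * (Real.pi : ℂ) * Complex.I *
          ∑ i : Fin ℓ, (∑ c : Fin q,
            ((φ (y c) i).val : ℂ) * ((φ (z c) i).val : ℂ)) / (r i : ℂ)))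
    (U : Matrix ((Fin m → Fin q → R) × (Fin n → Fin q → R))
                ((Fin m → Fin q → R) × (Fin n → Fin q → R)) ℂ)
    (hU : ∀ (y : Fin m → Fin q → R) (z : Fin n → Fin q → R)
        (p : (Fin m → Fin q → R) × (Fin n → Fin q → R)),
      U p (y, z) = if p = (y, fun j => z j + f j y) then 1 else 0)
    -- `WmI` is the Kronecker product of `m` copies of `W'` with the identity on `ℂ^{(R^q)^n}`
    (WmI : Matrix ((Fin m → Fin q → R) × (Fin n → Fin q → R))
                  ((Fin m → Fin q → R) × (Fin n → Fin q → R)) ℂ)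
    (hWmI : ∀ (a y : Fin m → Fin q → R) (w z : Fin n → Fin q → R),
      WmI (a, w) (y, z) = (∏ j : Fin m, W' (a j) (y j)) * (if w = z then 1 else 0))
    (y a : Fin m → Fin q → R) (w : Fin n → Fin q → R) :
    WmI.mulVec (U.mulVec (fun p => if p = (y, fun _ => 0) then 1 else 0)) (a, w) =
      if w = (fun j => f j y) then
        ((Real.sqrt (Fintype.card R) : ℂ) ^ (q * m))⁻¹ *
          Complex.exp (2 * (Real.pi : ℂ) * Complex.I *
            ∑ i : Fin ℓ, ∑ j : Fin m, (∑ c : Fin q,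
              ((φ (a j c) i).val : ℂ) * ((φ (y j c) i).val : ℂ)) / (r i : ℂ))
      else 0 := by
  have hUv : (U.mulVec (fun p => if p = (y, fun _ => 0) then 1 else 0)) =
      fun p => if p = (y, fun j => f j y) then 1 else 0 := by
    funext p
    rw [Matrix.mulVec, dotProduct]
    rw [Finset.sum_eq_single (y, fun _ => (0 : Fin q → R))]
    · simp [hU y (fun _ => 0) p]
    · intro b _ hb
      simp [hb]
    · simp
  rw [hUv]
  rw [Matrix.mulVec, dotProduct]
  rw [Finset.sum_eq_single (y, fun j => f j y)]
  · rw [hWmI]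
    simp only [mul_one]
    by_cases hw : w = fun j => f j y
    · rw [if_pos hw]
      simp only [if_true, mul_one]
      have : ∀ j : Fin m, W' (a j) (y j) =
          ((Real.sqrt (Fintype.card R) : ℂ) ^ q)⁻¹ *
            Complex.exp (2 * (Real.pi : ℂ) * Complex.I *
              ∑ i : Fin ℓ, (∑ c : Fin q,
                ((φ (y j c) i).val : ℂ) * ((φ (a j c) i).val : ℂ)) / (r i : ℂ)) :=
        fun j => hW' (y j) (a j)
      rw [Finset.prod_congr rfl fun j _ => this j, Finset.prod_mul_distrib,
        Finset.prod_const, Finset.card_univ, Fintype.card_fin, inv_pow, ← pow_mul,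
        ← Complex.exp_sum]
      rw [if_pos hw]
      congr 1
      congr 1
      rw [Finset.sum_comm, ← Finset.mul_sum]
      congr 1
      apply Finset.sum_congr rfl
      intro j _
      apply Finset.sum_congr rfl
      intro i _
      congr 1
      apply Finset.sum_congr rfl
      intro c _
      exact mul_comm _ _
    · simp [hw]
  · intro b _ hb
    simp [hb]
  · simp
end
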